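/- arXiv:1101.2932 — 2 statements merged into one kernel-verified Lean document; each statement's English description precedes it below -/
import Mathlib

section
/- Let a<b, 0<α<1, L ∈ C¹([a,b]×ℝ²;ℝ), and y_a, y_b ∈ ℝ. Suppose y:[a,b]→ℝ, with y' and ^C_aD_x^α y continuous on [a,b], satisfies y(a)=y_a, y(b)=y_b and is a local minimizer of J(y) = ∫_a^b L(x, y(x), ^C_aD_x^α y(x)) dx among all such functions satisfying the same boundary conditions, and assume that x ↦ ∂₃L(x, y(x), ^C_aD_x^α y(x)) admits a continuous right Riemann–Liouville derivative ₓD_b^α on [a,b]. Then ∂₂L(x, y(x), ^C_aD_x^α y(x)) + (ₓD_b^α ∂₃L(·, y(·), ^C_aD_x^α y(·)))(x) = 0 for all x ∈ [a,b]. -/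
open MeasureTheory Set

noncomputable section

/-- Left Riemann–Liouville fractional integral of order `α` with lower limit `a`. -/
def leftRLI (a α : ℝ) (f : ℝ → ℝ) (x : ℝ) : ℝ :=
  (1 / Real.Gamma α) * ∫ t in a..x, (x - t) ^ (α - 1) * f t

/-- Right Riemann–Liouville fractional integral of order `α` with upper limit `b`. -/
def rightRLI (b α : ℝ) (f : ℝ → ℝ) (x : ℝ) : ℝ :=
  (1 / Real.Gamma α) * ∫ t in x..b, (t - x) ^ (α - 1) * f t

/-- Left Caputo fractional derivative of order `α`. -/
def caputoL (a α : ℝ) (f : ℝ → ℝ) (x : ℝ) : ℝ :=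
  (1 / Real.Gamma (1 - α)) * ∫ t in a..x, (x - t) ^ (-α) * deriv f t

/-- Right Riemann–Liouville fractional derivative of order `α`. -/
def rightRLD (b α : ℝ) (g : ℝ → ℝ) (x : ℝ) : ℝ :=
  (-1 / Real.Gamma (1 - α)) * deriv (fun s => ∫ t in s..b, (t - s) ^ (-α) * g t) x

/-- `y'` and `^C_aD_x^α y` exist and are continuous on `[a,b]`. -/
def MemDs (a b α : ℝ) (y : ℝ → ℝ) : Prop :=
  (∀ x ∈ Icc a b, DifferentiableAt ℝ y x) ∧
  ContinuousOn (deriv y) (Icc a b) ∧ ContinuousOn (caputoL a α y) (Icc a b)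

/-- The norm `‖y‖_{1,∞} = max |y| + max |y'| + max |^C_aD_x^α y|` on `[a,b]`. -/
def norm1infS (a b α : ℝ) (y : ℝ → ℝ) : ℝ :=
  sSup ((fun x => |y x|) '' Icc a b) + sSup ((fun x => |deriv y x|) '' Icc a b) +
    sSup ((fun x => |caputoL a α y x|) '' Icc a b)

/-- `∂₂L` of a Lagrangian `L(x, y, w)`. -/
def d2 (L : ℝ → ℝ → ℝ → ℝ) (x u w : ℝ) : ℝ := deriv (fun s => L x s w) u

/-- `∂₃L` of a Lagrangian `L(x, y, w)`. -/
def d3 (L : ℝ → ℝ → ℝ → ℝ) (x u w : ℝ) : ℝ := deriv (fun s => L x u s) w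

/-- `x ↦ ∂₃L(x, y(x), ^C_aD_x^α y(x))`. -/
def d3Along (a α : ℝ) (L : ℝ → ℝ → ℝ → ℝ) (y : ℝ → ℝ) (x : ℝ) : ℝ :=
  d3 L x (y x) (caputoL a α y x)

/-- `g` admits a continuous right Riemann–Liouville derivative `ₓD_b^α` on `[a,b]`. -/
def HasContRightRLD (a b α : ℝ) (g : ℝ → ℝ) : Prop :=
  (∀ x ∈ Icc a b, DifferentiableAt ℝ (fun s => ∫ t in s..b, (t - s) ^ (-α) * g t) x) ∧
  ContinuousOn (rightRLD b α g) (Icc a b)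



section ELaux
open intervalIntegral Metric Topology

lemma kerInt {α : ℝ} (hα1 : α < 1) (x u v : ℝ) :
    IntervalIntegrable (fun t => (x - t) ^ (-α)) volume u v := by
  have h : IntervalIntegrable (fun s : ℝ => s ^ (-α)) volume (x - u) (x - v) :=
    intervalIntegral.intervalIntegrable_rpow' (by linarith)
  simpa using h.comp_sub_left x

lemma kerVal {α : ℝ} (hα1 : α < 1) {u x : ℝ} (hux : u ≤ x) :
    (∫ t in u..x, (x - t) ^ (-α)) = (x - u) ^ (1 - α) / (1 - α) := by
  have h1 : (∫ t in u..x, (x - t) ^ (-α)) = ∫ s in (x - x)..(x - u), s ^ (-α) :=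
    intervalIntegral.integral_comp_sub_left (fun s => s ^ (-α)) x
  rw [h1, sub_self]
  rw [integral_rpow (Or.inl (by linarith : (-1:ℝ) < -α))]
  rw [Real.zero_rpow (by linarith : -α + 1 ≠ 0)]
  ring_nf

lemma monoInt {α : ℝ} (hα0 : 0 < α) (hα1 : α < 1) {a x : ℝ} (hax : a ≤ x) (k : ℕ) :
    (∫ t in a..x, (x - t) ^ (-α) * (t - a) ^ k)
      = (∫ s in (0:ℝ)..1, (1 - s) ^ (-α) * s ^ k) * (x - a) ^ ((k : ℝ) + 1 - α) := by
  have hexp : (0:ℝ) < (k : ℝ) + 1 - α := by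
    have : (0:ℝ) ≤ k := Nat.cast_nonneg k
    linarith
  rcases eq_or_lt_of_le hax with h | h
  · subst h
    rw [intervalIntegral.integral_same, sub_self, Real.zero_rpow (ne_of_gt hexp), mul_zero]
  · have hxa : 0 < x - a := by linarith
    have h1 : (∫ t in a..x, (x - t) ^ (-α) * (t - a) ^ k)
        = ∫ u in (0:ℝ)..(x - a), (x - (a + u)) ^ (-α) * ((a + u) - a) ^ k := by
      rw [intervalIntegral.integral_comp_add_left
        (fun t => (x - t) ^ (-α) * (t - a) ^ k) a]
      norm_num
    have h2 : (x - a) • (∫ s in (0:ℝ)..1, (x - (a + (x - a) * s)) ^ (-α)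
            * ((a + (x - a) * s) - a) ^ k)
        = ∫ u in ((x-a)*0)..((x-a)*1), (x - (a + u)) ^ (-α) * ((a + u) - a) ^ k :=
      intervalIntegral.smul_integral_comp_mul_left (fun u => (x - (a + u)) ^ (-α) * ((a + u) - a) ^ k) (x - a)
    rw [mul_zero, mul_one] at h2
    rw [h1, ← h2, smul_eq_mul]
    have h3 : (∫ s in (0:ℝ)..1, (x - (a + (x - a) * s)) ^ (-α)
            * ((a + (x - a) * s) - a) ^ k)
        = ∫ s in (0:ℝ)..1, ((x - a) ^ (-α) * (x - a) ^ k) * ((1 - s) ^ (-α) * s ^ k) := by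
      apply intervalIntegral.integral_congr
      intro s hs
      rw [uIcc_of_le (by norm_num : (0:ℝ) ≤ 1)] at hs
      have h1s : 0 ≤ 1 - s := by linarith [hs.2]
      dsimp only
      have e1 : x - (a + (x - a) * s) = (x - a) * (1 - s) := by ring
      have e2 : (a + (x - a) * s) - a = (x - a) * s := by ring
      rw [e1, e2, Real.mul_rpow (le_of_lt hxa) h1s, mul_pow]
      ring
    rw [h3, intervalIntegral.integral_const_mul]
    rw [← Real.rpow_natCast (x - a) k, ← Real.rpow_add hxa]
    rw [← mul_assoc, ← Real.rpow_one_add' (le_of_lt hxa)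
      (by intro hc; rw [show (1:ℝ) + (-α + ↑k) = ↑k + 1 - α by ring] at hc; linarith)]
    rw [show (1:ℝ) + (-α + ↑k) = ↑k + 1 - α by ring, mul_comm]

lemma polyExpand (p : Polynomial ℝ) (a t : ℝ) :
    p.eval t = ∑ k ∈ Finset.range (p.natDegree + 1),
      (Polynomial.taylor a p).coeff k * (t - a) ^ k := by
  have h := Polynomial.taylor_eval a p (t - a)
  rw [sub_add_cancel] at h
  rw [← h, Polynomial.eval_eq_sum_range, Polynomial.natDegree_taylor]

lemma cont_rpow_shift (a : ℝ) {q : ℝ} (hq : 0 ≤ q) :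
    Continuous (fun x : ℝ => (x - a) ^ q) := by
  have h := Real.continuous_rpow_const hq
  exact h.comp (continuous_id.sub continuous_const)

lemma fracPolyVal {α : ℝ} (hα0 : 0 < α) (hα1 : α < 1) {a x : ℝ} (hax : a ≤ x)
    (p : Polynomial ℝ) :
    (∫ t in a..x, (x - t) ^ (-α) * p.eval t)
      = ∑ k ∈ Finset.range (p.natDegree + 1),
          (Polynomial.taylor a p).coeff k *
            ((∫ s in (0:ℝ)..1, (1 - s) ^ (-α) * s ^ k) * (x - a) ^ ((k : ℝ) + 1 - α)) := by
  have h1 : (∫ t in a..x, (x - t) ^ (-α) * p.eval t)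
      = ∫ t in a..x, ∑ k ∈ Finset.range (p.natDegree + 1),
          (Polynomial.taylor a p).coeff k * ((x - t) ^ (-α) * (t - a) ^ k) := by
    apply intervalIntegral.integral_congr; intro t _; dsimp only
    rw [polyExpand p a t, Finset.mul_sum]; apply Finset.sum_congr rfl; intros; ring
  rw [h1, intervalIntegral.integral_finset_sum]
  · exact Finset.sum_congr rfl fun k _ => by
      rw [intervalIntegral.integral_const_mul, monoInt hα0 hα1 hax k]
  · intro k _
    exact ((kerInt hα1 x a x).mul_continuousOn (by fun_prop)).const_mul _

lemma contOn_fracPoly {α : ℝ} (hα0 : 0 < α) (hα1 : α < 1) (a b : ℝ) (p : Polynomial ℝ) :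
    ContinuousOn (fun x => ∫ t in a..x, (x - t) ^ (-α) * p.eval t) (Icc a b) := by
  apply ContinuousOn.congr (f := fun x => ∑ k ∈ Finset.range (p.natDegree + 1),
          (Polynomial.taylor a p).coeff k *
            ((∫ s in (0:ℝ)..1, (1 - s) ^ (-α) * s ^ k) * (x - a) ^ ((k : ℝ) + 1 - α)))
  · apply continuousOn_finset_sum
    intro k _
    apply ContinuousOn.mul continuousOn_const
    apply Continuous.continuousOn
    apply Continuous.mul continuous_const
    apply cont_rpow_shift
    have : (0:ℝ) ≤ k := Nat.cast_nonneg k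
    linarith
  · intro x hx
    exact fracPolyVal hα0 hα1 hx.1 p

lemma deriv_polyeval (P : Polynomial ℝ) :
    deriv (fun t : ℝ => P.eval t) = fun t => P.derivative.eval t :=
  funext fun t => Polynomial.deriv P

lemma caputo_poly (a α : ℝ) (P : Polynomial ℝ) (x : ℝ) :
    caputoL a α (fun t => P.eval t) x
      = (1 / Real.Gamma (1 - α)) * ∫ t in a..x, (x - t) ^ (-α) * P.derivative.eval t := by
  unfold caputoL
  rw [deriv_polyeval]

lemma contOn_caputo_poly {α : ℝ} (hα0 : 0 < α) (hα1 : α < 1) (a b : ℝ) (P : Polynomial ℝ) :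
    ContinuousOn (caputoL a α (fun t => P.eval t)) (Icc a b) := by
  have h := (contOn_fracPoly hα0 hα1 a b P.derivative).const_smul (1 / Real.Gamma (1 - α))
  apply h.congr
  intro x hx
  rw [caputo_poly]
  simp [smul_eq_mul]

lemma caputo_smul_poly (a α ε : ℝ) (P : Polynomial ℝ) (x : ℝ) :
    caputoL a α (fun t => ε * P.eval t) x = ε * caputoL a α (fun t => P.eval t) x := by
  unfold caputoL
  have hd : deriv (fun t : ℝ => ε * P.eval t) = fun t => ε * P.derivative.eval t := by
    funext t
    rw [deriv_const_mul ε (P.differentiable.differentiableAt), Polynomial.deriv]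
  rw [hd, deriv_polyeval]
  rw [show (∫ t in a..x, (x - t) ^ (-α) * (ε * Polynomial.eval t P.derivative))
      = ∫ t in a..x, ε * ((x - t) ^ (-α) * Polynomial.eval t P.derivative) by
    apply intervalIntegral.integral_congr; intro t _; ring]
  rw [intervalIntegral.integral_const_mul]
  ring

lemma caputo_add_smul_poly {a b α : ℝ} (hα1 : α < 1) {y : ℝ → ℝ}
    (hy1 : ∀ t ∈ Icc a b, DifferentiableAt ℝ y t) (hder : ContinuousOn (deriv y) (Icc a b))
    (P : Polynomial ℝ) (ε : ℝ) {x : ℝ} (hx : x ∈ Icc a b) (hab : a ≤ b) :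
    caputoL a α (fun t => y t + ε * P.eval t) x
      = caputoL a α y x + ε * caputoL a α (fun t => P.eval t) x := by
  unfold caputoL
  have hsub : uIcc a x ⊆ Icc a b := by
    rw [uIcc_of_le hx.1]
    exact Icc_subset_Icc le_rfl hx.2
  have h1 : (∫ t in a..x, (x - t) ^ (-α) * deriv (fun s => y s + ε * P.eval s) t)
      = ∫ t in a..x, ((x - t) ^ (-α) * deriv y t
          + ε * ((x - t) ^ (-α) * deriv (fun s : ℝ => P.eval s) t)) := by
    apply intervalIntegral.integral_congr
    intro t ht
    have hyd := hy1 t (hsub ht)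
    have hPd : HasDerivAt (fun s : ℝ => ε * P.eval s) (ε * P.derivative.eval t) t :=
      (P.hasDerivAt t).const_mul ε
    have : deriv (fun s => y s + ε * P.eval s) t = deriv y t + ε * P.derivative.eval t :=
      (hyd.hasDerivAt.add hPd).deriv
    dsimp only
    rw [this, deriv_polyeval]
    ring
  rw [h1, intervalIntegral.integral_add]
  · rw [intervalIntegral.integral_const_mul]; ring
  · exact (kerInt hα1 x a x).mul_continuousOn (hder.mono hsub)
  · exact ((kerInt hα1 x a x).mul_continuousOn (by rw [deriv_polyeval]; fun_prop)).const_mul ε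

lemma fderiv_apply_eq {L : ℝ → ℝ → ℝ → ℝ}
    (hL : ContDiff ℝ 1 fun p : ℝ × ℝ × ℝ => L p.1 p.2.1 p.2.2) (x u v p q : ℝ) :
    (fderiv ℝ (fun p : ℝ × ℝ × ℝ => L p.1 p.2.1 p.2.2) (x, u, v)) (0, p, q)
      = p * d2 L x u v + q * d3 L x u v := by
  set L3 : ℝ × ℝ × ℝ → ℝ := fun p => L p.1 p.2.1 p.2.2 with hL3
  have hdiff : DifferentiableAt ℝ L3 (x, u, v) := (hL.differentiable one_ne_zero) _
  set D := fderiv ℝ L3 (x, u, v) with hD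
  have h2 : HasDerivAt (fun s => L x s v) (D ((0:ℝ), (1:ℝ), (0:ℝ))) u := by
    have hline : HasDerivAt (fun s : ℝ => ((x : ℝ), s, (v : ℝ))) ((0:ℝ), (1:ℝ), (0:ℝ)) u :=
      (hasDerivAt_const u x).prodMk ((hasDerivAt_id u).prodMk (hasDerivAt_const u v))
    exact hdiff.hasFDerivAt.comp_hasDerivAt u hline
  have h3 : HasDerivAt (fun s => L x u s) (D ((0:ℝ), (0:ℝ), (1:ℝ))) v := by
    have hline : HasDerivAt (fun s : ℝ => ((x : ℝ), (u : ℝ), s)) ((0:ℝ), (0:ℝ), (1:ℝ)) v :=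
      (hasDerivAt_const v x).prodMk ((hasDerivAt_const v u).prodMk (hasDerivAt_id v))
    exact hdiff.hasFDerivAt.comp_hasDerivAt v hline
  have e2 : d2 L x u v = D ((0:ℝ), (1:ℝ), (0:ℝ)) := h2.deriv
  have e3 : d3 L x u v = D ((0:ℝ), (0:ℝ), (1:ℝ)) := h3.deriv
  have hv : ((0:ℝ), (p:ℝ), (q:ℝ)) = p • ((0:ℝ), (1:ℝ), (0:ℝ)) + q • ((0:ℝ), (0:ℝ), (1:ℝ)) := by
    simp [Prod.ext_iff]
  rw [hv, map_add, D.map_smul, D.map_smul, ← e2, ← e3, smul_eq_mul, smul_eq_mul]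

lemma firstVariation {a b : ℝ} (hab : a < b)
    {L : ℝ → ℝ → ℝ → ℝ}
    (hL : ContDiff ℝ 1 fun p : ℝ × ℝ × ℝ => L p.1 p.2.1 p.2.2)
    {y w η c : ℝ → ℝ}
    (hy : ContinuousOn y (Icc a b)) (hw : ContinuousOn w (Icc a b))
    (hη : ContinuousOn η (Icc a b)) (hc : ContinuousOn c (Icc a b)) :
    HasDerivAt (fun ε => ∫ x in a..b, L x (y x + ε * η x) (w x + ε * c x))
      (∫ x in a..b, d2 L x (y x) (w x) * η x + d3 L x (y x) (w x) * c x) 0 := by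
  set L3 : ℝ × ℝ × ℝ → ℝ := fun p => L p.1 p.2.1 p.2.2 with hL3
  set F' : ℝ → ℝ → ℝ :=
    fun ε x => (fderiv ℝ L3 (x, y x + ε * η x, w x + ε * c x)) (0, η x, c x) with hF'
  -- bounds
  obtain ⟨Cy, hCy⟩ := isCompact_Icc.exists_bound_of_continuousOn hy
  obtain ⟨Cw, hCw⟩ := isCompact_Icc.exists_bound_of_continuousOn hw
  obtain ⟨Cη, hCη⟩ := isCompact_Icc.exists_bound_of_continuousOn hη
  obtain ⟨Cc, hCc⟩ := isCompact_Icc.exists_bound_of_continuousOn hc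
  have hane : a ∈ Icc a b := ⟨le_rfl, hab.le⟩
  have hCy0 : 0 ≤ Cy := le_trans (norm_nonneg _) (hCy a hane)
  have hCw0 : 0 ≤ Cw := le_trans (norm_nonneg _) (hCw a hane)
  have hCη0 : 0 ≤ Cη := le_trans (norm_nonneg _) (hCη a hane)
  have hCc0 : 0 ≤ Cc := le_trans (norm_nonneg _) (hCc a hane)
  set R : ℝ := Cy + Cw + Cη + Cc with hR
  have hK : IsCompact ((Icc a b) ×ˢ (Icc (-R) R ×ˢ Icc (-R) R)) :=
    isCompact_Icc.prod (isCompact_Icc.prod isCompact_Icc)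
  obtain ⟨B, hB⟩ := hK.exists_bound_of_continuousOn
    ((hL.continuous_fderiv one_ne_zero).continuousOn (s := (Icc a b) ×ˢ (Icc (-R) R ×ˢ Icc (-R) R)))
  have hIsub : Set.uIoc a b ⊆ Icc a b := by
    rw [uIoc_of_le hab.le]; exact Ioc_subset_Icc_self
  -- continuity of the integrand for each ε
  have hcont : ∀ ε : ℝ, ContinuousOn (fun x => L x (y x + ε * η x) (w x + ε * c x)) (Icc a b) := by
    intro ε
    have hpt : ContinuousOn (fun x => ((x : ℝ), (y x + ε * η x, w x + ε * c x))) (Icc a b) :=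
      continuousOn_id.prodMk (((hy.add (continuousOn_const.mul hη))).prodMk
        ((hw.add (continuousOn_const.mul hc))))
    exact hL.continuous.comp_continuousOn hpt
  have hcontF' : ∀ ε : ℝ, ContinuousOn (F' ε) (Icc a b) := by
    intro ε
    have hpt : ContinuousOn (fun x => ((x : ℝ), (y x + ε * η x, w x + ε * c x))) (Icc a b) :=
      continuousOn_id.prodMk (((hy.add (continuousOn_const.mul hη))).prodMk
        ((hw.add (continuousOn_const.mul hc))))
    exact ((hL.continuous_fderiv one_ne_zero).comp_continuousOn hpt).clm_apply
      (continuousOn_const.prodMk (hη.prodMk hc))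
  have key := intervalIntegral.hasDerivAt_integral_of_dominated_loc_of_deriv_le
    (F := fun ε x => L x (y x + ε * η x) (w x + ε * c x)) (F' := F') (x₀ := (0:ℝ))
    (bound := fun _ => B * (Cη + Cc)) (a := a) (b := b) (μ := volume)
    (Metric.ball_mem_nhds (0:ℝ) one_pos)
    (Filter.Eventually.of_forall fun ε =>
      ((hcont ε).mono hIsub).aestronglyMeasurable measurableSet_uIoc)
    (((hcont 0).mono (by rw [uIcc_of_le hab.le])).intervalIntegrable)
    (((hcontF' 0).mono hIsub).aestronglyMeasurable measurableSet_uIoc)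
    ?hbound
    (intervalIntegrable_const)
    ?hdiff
  case hbound =>
    apply Filter.Eventually.of_forall
    intro x hx ε hε
    have hxI := hIsub hx
    have hεle : |ε| ≤ 1 := le_of_lt (by simpa [Real.dist_eq] using hε)
    have hy' := hCy x hxI; have hη' := hCη x hxI
    have hw' := hCw x hxI; have hc' := hCc x hxI
    simp only [Real.norm_eq_abs] at hy' hη' hw' hc'
    have hεη : |ε| * |η x| ≤ 1 * Cη := mul_le_mul hεle hη' (abs_nonneg _) zero_le_one
    have hεc : |ε| * |c x| ≤ 1 * Cc := mul_le_mul hεle hc' (abs_nonneg _) zero_le_one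
    have habs1 := abs_add_le (y x) (ε * η x)
    rw [abs_mul] at habs1
    have habs2 := abs_add_le (w x) (ε * c x)
    rw [abs_mul] at habs2
    have h1 : |y x + ε * η x| ≤ R := by rw [hR]; linarith
    have h2 : |w x + ε * c x| ≤ R := by rw [hR]; linarith
    have hmem : ((x : ℝ), (y x + ε * η x, w x + ε * c x))
        ∈ (Icc a b) ×ˢ (Icc (-R) R ×ˢ Icc (-R) R) :=
      ⟨hxI, Set.mem_Icc.mpr (abs_le.mp h1), Set.mem_Icc.mpr (abs_le.mp h2)⟩
    calc ‖F' ε x‖ ≤ ‖fderiv ℝ L3 (x, y x + ε * η x, w x + ε * c x)‖ * ‖((0:ℝ), η x, c x)‖ :=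
          ContinuousLinearMap.le_opNorm _ _
      _ ≤ B * (Cη + Cc) := by
          apply mul_le_mul (hB _ hmem) ?_ (norm_nonneg _)
            (le_trans (norm_nonneg _) (hB _ hmem))
          rw [Prod.norm_def, Prod.norm_def]
          simp only [norm_zero, Real.norm_eq_abs]
          have h1 := hCη x hxI; have h2 := hCc x hxI
          simp only [Real.norm_eq_abs] at h1 h2
          apply max_le (by linarith)
          exact max_le (by linarith) (by linarith)
  case hdiff =>
    apply Filter.Eventually.of_forall
    intro x hx ε hε
    have hline : HasDerivAt (fun ε : ℝ => ((x:ℝ), y x + ε * η x, w x + ε * c x))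
        ((0:ℝ), η x, c x) ε :=
      (hasDerivAt_const ε x).prodMk
        (((hasDerivAt_mul_const (η x)).const_add (y x)).prodMk
          ((hasDerivAt_mul_const (c x)).const_add (w x)))
    exact (((hL.differentiable one_ne_zero) _).hasFDerivAt.comp_hasDerivAt ε hline)
  -- now rewrite the value of the derivative
  have heq : (∫ x in a..b, F' 0 x)
      = ∫ x in a..b, d2 L x (y x) (w x) * η x + d3 L x (y x) (w x) * c x := by
    apply intervalIntegral.integral_congr
    intro x _
    have : y x + 0 * η x = y x := by ring
    have h2 : w x + 0 * c x = w x := by ring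
    rw [hF']
    dsimp only
    rw [this, h2, fderiv_apply_eq hL]
    ring
  rw [heq] at key
  exact key.2

lemma fracParts {a b α : ℝ} (hab : a < b) (hα0 : 0 < α) (hα1 : α < 1)
    {g : ℝ → ℝ} (hgc : ContinuousOn g (Icc a b))
    (hKd : ∀ x ∈ Icc a b, DifferentiableAt ℝ (fun s => ∫ t in s..b, (t - s) ^ (-α) * g t) x)
    (hRLc : ContinuousOn (rightRLD b α g) (Icc a b))
    (P : Polynomial ℝ) (hPa : P.eval a = 0) (hPb : P.eval b = 0) :
    (∫ x in a..b, g x * caputoL a α (fun t => P.eval t) x)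
      = ∫ x in a..b, (P.eval x) * rightRLD b α g x := by
  have hΓpos : 0 < Real.Gamma (1 - α) := Real.Gamma_pos_of_pos (by linarith)
  have hΓne : Real.Gamma (1 - α) ≠ 0 := ne_of_gt hΓpos
  set q : ℝ → ℝ := fun t => P.derivative.eval t with hq
  have hqc : Continuous q := by fun_prop
  set gt : ℝ → ℝ := Set.IccExtend hab.le ((Icc a b).restrict g) with hgt
  have hgtc : Continuous gt := hgc.restrict.Icc_extend'
  have hgte : ∀ x ∈ Icc a b, gt x = g x := by
    intro x hx
    rw [hgt, Set.IccExtend_of_mem hab.le _ hx]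
    rfl
  set K : ℝ → ℝ := fun s => ∫ t in s..b, (t - s) ^ (-α) * g t with hK
  set Φ : ℝ × ℝ → ℝ :=
    fun p => if p.2 < p.1 then (p.1 - p.2) ^ (-α) * (gt p.1 * q p.2) else 0 with hΦ
  -- bounds
  obtain ⟨Mg, hMg⟩ := isCompact_Icc.exists_bound_of_continuousOn
    (hgtc.continuousOn : ContinuousOn gt (Icc a b))
  obtain ⟨Mq, hMq⟩ := isCompact_Icc.exists_bound_of_continuousOn
    (hqc.continuousOn : ContinuousOn q (Icc a b))
  have hMg0 : 0 ≤ Mg := le_trans (norm_nonneg _) (hMg a ⟨le_rfl, hab.le⟩)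
  have hMq0 : 0 ≤ Mq := le_trans (norm_nonneg _) (hMq a ⟨le_rfl, hab.le⟩)
  -- measurability of Φ
  have hΦm : AEStronglyMeasurable Φ ((volume.restrict (Ioc a b)).prod (volume.restrict (Ioc a b))) := by
    apply Measurable.aestronglyMeasurable
    apply Measurable.ite (measurableSet_lt measurable_snd measurable_fst)
    · exact ((measurable_fst.sub measurable_snd).pow measurable_const).mul
        ((hgtc.measurable.comp measurable_fst).mul (hqc.measurable.comp measurable_snd))
    · exact measurable_const
  -- x-slices
  have hslicex : ∀ x, (fun t => Φ (x, t))
      = (Iio x).indicator (fun t => (x - t) ^ (-α) * (gt x * q t)) := by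
    intro x; funext t
    by_cases h : t < x
    · simp [hΦ, Set.indicator_of_mem (mem_Iio.mpr h), h]
    · simp [hΦ, Set.indicator_of_notMem (fun hc => h (mem_Iio.mp hc)), h]
  have hIioIoc : ∀ x ∈ Ioc a b, Iio x ∩ Ioc a b = Ioo a x := by
    intro x hx
    ext t
    constructor
    · rintro ⟨h1, h2, _⟩; exact ⟨h2, h1⟩
    · rintro ⟨h1, h2⟩; exact ⟨h2, h1, le_trans (le_of_lt h2) hx.2⟩
  have hL2 : ∀ x ∈ Ioc a b, (∫ t, Φ (x, t) ∂(volume.restrict (Ioc a b)))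
      = gt x * ∫ t in a..x, (x - t) ^ (-α) * q t := by
    intro x hx
    rw [hslicex x, MeasureTheory.integral_indicator measurableSet_Iio,
      Measure.restrict_restrict measurableSet_Iio, hIioIoc x hx,
      ← integral_Ioc_eq_integral_Ioo, ← intervalIntegral.integral_of_le hx.1.le]
    rw [← intervalIntegral.integral_const_mul]
    apply intervalIntegral.integral_congr
    intro t _; dsimp only; ring
  -- t-slices
  have hslicet : ∀ t, (fun x => Φ (x, t))
      = (Ioi t).indicator (fun x => (x - t) ^ (-α) * (gt x * q t)) := by
    intro t; funext x
    by_cases h : t < x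
    · simp [hΦ, Set.indicator_of_mem (mem_Ioi.mpr h), h]
    · simp [hΦ, Set.indicator_of_notMem (fun hc => h (mem_Ioi.mp hc)), h]
  have hIoiIoc : ∀ t ∈ Ioc a b, Ioi t ∩ Ioc a b = Ioc t b := by
    intro t ht
    ext x
    constructor
    · rintro ⟨h1, _, h3⟩; exact ⟨h1, h3⟩
    · rintro ⟨h1, h2⟩; exact ⟨h1, lt_trans ht.1 h1, h2⟩
  have hL3 : ∀ t ∈ Ioc a b, (∫ x, Φ (x, t) ∂(volume.restrict (Ioc a b)))
      = q t * ∫ x in t..b, (x - t) ^ (-α) * gt x := by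
    intro t ht
    rw [hslicet t, MeasureTheory.integral_indicator measurableSet_Ioi,
      Measure.restrict_restrict measurableSet_Ioi, hIoiIoc t ht,
      ← intervalIntegral.integral_of_le ht.2]
    rw [← intervalIntegral.integral_const_mul]
    apply intervalIntegral.integral_congr
    intro x _; dsimp only; ring
  -- integrability of slices in t
  have hslice_int : ∀ x ∈ Ioc a b, Integrable (fun t => Φ (x, t)) (volume.restrict (Ioc a b)) := by
    intro x hx
    rw [hslicex x, integrable_indicator_iff measurableSet_Iio]
    have h1 : IntervalIntegrable (fun t => (x - t) ^ (-α) * (gt x * q t)) volume a x :=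
      (kerInt hα1 x a x).mul_continuousOn (by fun_prop)
    have h2 : IntegrableOn (fun t => (x - t) ^ (-α) * (gt x * q t)) (Ioc a x) volume :=
      (intervalIntegrable_iff_integrableOn_Ioc_of_le hx.1.le).mp h1
    have h3 : IntegrableOn (fun t => (x - t) ^ (-α) * (gt x * q t)) (Ioo a x) volume :=
      h2.mono_set Ioo_subset_Ioc_self
    unfold IntegrableOn
    rw [Measure.restrict_restrict measurableSet_Iio, hIioIoc x hx]
    exact h3
  -- kernel positivity and integral bound
  set M : ℝ := Mg * Mq * ((b - a) ^ (1 - α) / (1 - α)) with hM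
  have hnorm_bound : ∀ x ∈ Ioc a b, (∫ t, ‖Φ (x, t)‖ ∂(volume.restrict (Ioc a b))) ≤ M := by
    intro x hx
    have hxa : a ≤ x := hx.1.le
    have heq : (∫ t, ‖Φ (x, t)‖ ∂(volume.restrict (Ioc a b))) = ∫ t in Ioo a x, ‖(x - t) ^ (-α) * (gt x * q t)‖ := by
      have hfe : (fun t => ‖Φ (x, t)‖)
          = (Iio x).indicator (fun t => ‖(x - t) ^ (-α) * (gt x * q t)‖) := by
        funext t
        rw [show Φ (x, t) = (Iio x).indicator (fun t => (x - t) ^ (-α) * (gt x * q t)) t from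
          congrFun (hslicex x) t]
        exact norm_indicator_eq_indicator_norm _ t
      rw [hfe, MeasureTheory.integral_indicator measurableSet_Iio,
        Measure.restrict_restrict measurableSet_Iio, hIioIoc x hx]
    rw [heq]
    have hint1 : IntegrableOn (fun t => ‖(x - t) ^ (-α) * (gt x * q t)‖) (Ioo a x) volume := by
      apply Integrable.norm
      exact (((intervalIntegrable_iff_integrableOn_Ioc_of_le hxa).mp
        ((kerInt hα1 x a x).mul_continuousOn (by fun_prop))).mono_set Ioo_subset_Ioc_self)
    have hint2 : IntegrableOn (fun t => (x - t) ^ (-α) * (Mg * Mq)) (Ioo a x) volume :=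
      (((intervalIntegrable_iff_integrableOn_Ioc_of_le hxa).mp
        ((kerInt hα1 x a x).mul_const _)).mono_set Ioo_subset_Ioc_self)
    have hmono : (∫ t in Ioo a x, ‖(x - t) ^ (-α) * (gt x * q t)‖)
        ≤ ∫ t in Ioo a x, (x - t) ^ (-α) * (Mg * Mq) := by
      apply setIntegral_mono_on hint1 hint2 measurableSet_Ioo
      intro t ht
      have hker : (0:ℝ) ≤ (x - t) ^ (-α) :=
        Real.rpow_nonneg (by linarith [ht.2] : (0:ℝ) ≤ x - t) _
      rw [norm_mul, Real.norm_eq_abs, Real.norm_eq_abs, abs_of_nonneg hker]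
      apply mul_le_mul_of_nonneg_left _ hker
      have htI : t ∈ Icc a b := ⟨ht.1.le, le_trans ht.2.le hx.2⟩
      have hxI : x ∈ Icc a b := ⟨hxa, hx.2⟩
      have h1 := hMg x hxI
      have h2 := hMq t htI
      rw [Real.norm_eq_abs] at h1 h2
      calc |gt x * q t| = |gt x| * |q t| := abs_mul _ _
        _ ≤ Mg * Mq := mul_le_mul h1 h2 (abs_nonneg _) hMg0
    have hval : (∫ t in Ioo a x, (x - t) ^ (-α) * (Mg * Mq))
        = (Mg * Mq) * ((x - a) ^ (1 - α) / (1 - α)) := by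
      rw [← integral_Ioc_eq_integral_Ioo, ← intervalIntegral.integral_of_le hxa,
        intervalIntegral.integral_mul_const, kerVal hα1 hxa]
      ring
    have hle : (x - a) ^ (1 - α) ≤ (b - a) ^ (1 - α) :=
      Real.rpow_le_rpow (by linarith) (by linarith [hx.2]) (by linarith)
    have hdiv : (x - a) ^ (1 - α) / (1 - α) ≤ (b - a) ^ (1 - α) / (1 - α) :=
      (div_le_div_iff_of_pos_right (show (0:ℝ) < 1 - α by linarith)).mpr hle
    calc (∫ t in Ioo a x, ‖(x - t) ^ (-α) * (gt x * q t)‖)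
        ≤ (Mg * Mq) * ((x - a) ^ (1 - α) / (1 - α)) := by rw [← hval]; exact hmono
      _ ≤ M := by rw [hM]; exact mul_le_mul_of_nonneg_left hdiv (by positivity)
  -- integrability of Φ on the product
  haveI hμIfin : IsFiniteMeasure (volume.restrict (Ioc a b)) := by
    constructor
    rw [Measure.restrict_apply_univ]
    exact measure_Ioc_lt_top
  have hInt : Integrable Φ ((volume.restrict (Ioc a b)).prod (volume.restrict (Ioc a b))) := by
    rw [show Φ = Function.uncurry (fun x t => Φ (x, t)) from rfl] at hΦm ⊢
    rw [integrable_prod_iff hΦm]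
    constructor
    · rw [ae_restrict_iff' measurableSet_Ioc]
      exact Filter.Eventually.of_forall fun x hx => hslice_int x hx
    · apply Integrable.mono' (integrable_const M) hΦm.norm.integral_prod_right'
      rw [ae_restrict_iff' measurableSet_Ioc]
      apply Filter.Eventually.of_forall
      intro x hx
      rw [Real.norm_eq_abs, abs_of_nonneg (integral_nonneg fun t => norm_nonneg _)]
      exact hnorm_bound x hx
  -- Fubini
  have hswap : (∫ x, ∫ t, Φ (x, t) ∂(volume.restrict (Ioc a b)) ∂(volume.restrict (Ioc a b))) = ∫ t, ∫ x, Φ (x, t) ∂(volume.restrict (Ioc a b)) ∂(volume.restrict (Ioc a b)) :=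
    integral_integral_swap hInt
  -- step 1 conclusion
  have hKt : ∀ t ∈ Ioc a b, (∫ x in t..b, (x - t) ^ (-α) * gt x) = K t := by
    intro t ht
    apply intervalIntegral.integral_congr
    intro x hxm
    rw [uIcc_of_le ht.2] at hxm
    have : x ∈ Icc a b := ⟨le_trans ht.1.le hxm.1, hxm.2⟩
    dsimp only
    rw [hgte x this]
  have hstep1 : (∫ x in a..b, g x * ∫ t in a..x, (x - t) ^ (-α) * q t)
      = ∫ t in a..b, q t * K t := by
    rw [intervalIntegral.integral_of_le hab.le, intervalIntegral.integral_of_le hab.le]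
    have e1 : (∫ x in Ioc a b, g x * ∫ t in a..x, (x - t) ^ (-α) * q t)
        = ∫ x, (∫ t, Φ (x, t) ∂(volume.restrict (Ioc a b))) ∂(volume.restrict (Ioc a b)) := by
      apply setIntegral_congr_fun measurableSet_Ioc
      intro x hx
      dsimp only
      rw [hL2 x hx, hgte x ⟨hx.1.le, hx.2⟩]
    have e2 : (∫ t in Ioc a b, q t * K t) = ∫ t, (∫ x, Φ (x, t) ∂(volume.restrict (Ioc a b))) ∂(volume.restrict (Ioc a b)) := by
      apply setIntegral_congr_fun measurableSet_Ioc
      intro t ht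
      dsimp only
      rw [hL3 t ht, hKt t ht]
    rw [e1, e2, hswap]
  -- derivative of K
  have hKderiv : ∀ s ∈ Icc a b, deriv K s = -Real.Gamma (1 - α) * rightRLD b α g s := by
    intro s hs
    have : rightRLD b α g s = (-1 / Real.Gamma (1 - α)) * deriv K s := rfl
    rw [this]
    field_simp
  have hKcont : ContinuousOn (deriv K) (Icc a b) := by
    have h1 : ContinuousOn (fun s => -Real.Gamma (1 - α) * rightRLD b α g s) (Icc a b) :=
      continuousOn_const.mul hRLc
    exact h1.congr fun s hs => hKderiv s hs
  have hKint : IntervalIntegrable (deriv K) volume a b :=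
    (hKcont.mono (by rw [uIcc_of_le hab.le])).intervalIntegrable
  have hqint : IntervalIntegrable q volume a b := hqc.intervalIntegrable a b
  -- integration by parts
  have hparts := intervalIntegral.integral_mul_deriv_eq_deriv_mul
    (u := K) (u' := deriv K) (v := fun t => P.eval t) (v' := q)
    (fun t ht => (hKd t (by rwa [uIcc_of_le hab.le] at ht)).hasDerivAt)
    (fun t _ => P.hasDerivAt t) hKint hqint
  rw [hPa, hPb, mul_zero, mul_zero, sub_zero, zero_sub] at hparts
  -- assemble
  have hcapu : ∀ x, caputoL a α (fun t => P.eval t) x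
      = (1 / Real.Gamma (1 - α)) * ∫ t in a..x, (x - t) ^ (-α) * q t := by
    intro x
    unfold caputoL
    congr 1
    apply intervalIntegral.integral_congr
    intro t _
    dsimp only
    rw [Polynomial.deriv]
  calc (∫ x in a..b, g x * caputoL a α (fun t => P.eval t) x)
      = (1 / Real.Gamma (1 - α))
          * ∫ x in a..b, g x * ∫ t in a..x, (x - t) ^ (-α) * q t := by
        rw [← intervalIntegral.integral_const_mul]
        apply intervalIntegral.integral_congr
        intro x _
        dsimp only
        rw [hcapu x]
        ring
    _ = (1 / Real.Gamma (1 - α)) * ∫ t in a..b, q t * K t := by rw [hstep1]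
    _ = (1 / Real.Gamma (1 - α)) * ∫ t in a..b, K t * q t := by
        congr 1
        apply intervalIntegral.integral_congr
        intro t _
        ring
    _ = (1 / Real.Gamma (1 - α)) * -∫ t in a..b, deriv K t * P.eval t := by rw [hparts]
    _ = ∫ x in a..b, (P.eval x) * rightRLD b α g x := by
        rw [← intervalIntegral.integral_neg, ← intervalIntegral.integral_const_mul]
        apply intervalIntegral.integral_congr
        intro t ht
        rw [uIcc_of_le hab.le] at ht
        dsimp only
        rw [hKderiv t ht]
        field_simp

lemma extend_zero_Icc {F : ℝ → ℝ} {a b : ℝ} (hab : a < b)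
    (hF : ContinuousOn F (Icc a b)) (h0 : ∀ x ∈ Ioo a b, F x = 0) :
    ∀ x ∈ Icc a b, F x = 0 := by
  intro x hx
  by_cases hxo : x ∈ Ioo a b
  · exact h0 x hxo
  · have hne : (𝓝[Ioo a b] x).NeBot := by
      apply mem_closure_iff_nhdsWithin_neBot.mp
      rw [closure_Ioo hab.ne]
      exact hx
    have hc : Filter.Tendsto F (𝓝[Ioo a b] x) (𝓝 (F x)) :=
      ((hF x hx).mono Ioo_subset_Icc_self).tendsto
    have hc0 : Filter.Tendsto F (𝓝[Ioo a b] x) (𝓝 0) := by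
      apply Filter.Tendsto.congr' _ tendsto_const_nhds
      filter_upwards [eventually_mem_nhdsWithin] with t ht
      exact (h0 t ht).symm
    exact tendsto_nhds_unique hc hc0

lemma fundamentalLemma {a b : ℝ} (hab : a < b) {F : ℝ → ℝ}
    (hF : ContinuousOn F (Icc a b))
    (hint : ∀ P : Polynomial ℝ,
      (∫ x in a..b, F x * ((x - a) * (b - x) * P.eval x)) = 0) :
    ∀ x ∈ Icc a b, F x = 0 := by
  set H : ℝ → ℝ := fun x => F x * ((x - a) * (b - x)) with hH
  have hHc : ContinuousOn H (Icc a b) := hF.mul (by fun_prop)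
  have hHint : ∀ P : Polynomial ℝ, (∫ x in a..b, H x * P.eval x) = 0 := by
    intro P
    rw [← hint P]
    apply intervalIntegral.integral_congr
    intro x _; dsimp only [hH]; ring
  obtain ⟨MH, hMH⟩ := isCompact_Icc.exists_bound_of_continuousOn hHc
  have hMH0 : 0 ≤ MH := le_trans (norm_nonneg _) (hMH a ⟨le_rfl, hab.le⟩)
  set I : ℝ := ∫ x in a..b, H x * H x with hI
  have hInn : 0 ≤ I :=
    intervalIntegral.integral_nonneg hab.le fun x _ => mul_self_nonneg _
  have hIint : IntervalIntegrable (fun x => H x * H x) volume a b :=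
    ((hHc.mul hHc).mono (by rw [uIcc_of_le hab.le])).intervalIntegrable
  have key : ∀ ε : ℝ, 0 < ε → I ≤ MH * ε * (b - a) := by
    intro ε hε
    obtain ⟨p, hp⟩ := exists_polynomial_near_of_continuousOn a b H hHc ε hε
    have hpc : Continuous fun x : ℝ => Polynomial.eval x p := by fun_prop
    have hHp : IntervalIntegrable (fun x => H x * p.eval x) volume a b :=
      ((hHc.mul hpc.continuousOn).mono (by rw [uIcc_of_le hab.le])).intervalIntegrable
    have hsub : (∫ x in a..b, H x * (H x - p.eval x)) = I := by
      have : (fun x => H x * (H x - p.eval x))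
          = fun x => H x * H x - H x * p.eval x := by funext x; ring
      rw [this, intervalIntegral.integral_sub hIint hHp, hHint p, sub_zero]
    have hbound : ∀ x ∈ Set.uIoc a b, ‖H x * (H x - p.eval x)‖ ≤ MH * ε := by
      intro x hx
      have hxI : x ∈ Icc a b := by
        rw [uIoc_of_le hab.le] at hx
        exact ⟨hx.1.le, hx.2⟩
      rw [norm_mul]
      apply mul_le_mul (hMH x hxI) _ (norm_nonneg _) hMH0
      rw [Real.norm_eq_abs, abs_sub_comm]
      exact (hp x hxI).le
    have := intervalIntegral.norm_integral_le_of_norm_le_const hbound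
    rw [hsub] at this
    calc I ≤ |I| := le_abs_self I
      _ ≤ MH * ε * |b - a| := this
      _ = MH * ε * (b - a) := by rw [abs_of_pos (by linarith)]
  have hI0 : I = 0 := by
    by_contra hI0
    have hIpos : 0 < I := lt_of_le_of_ne hInn (Ne.symm hI0)
    have hd : 0 < MH * (b - a) + 1 := by nlinarith
    have hkey := key (I / (2 * (MH * (b - a) + 1))) (by positivity)
    have hs : 0 ≤ MH * (b - a) := mul_nonneg hMH0 (by linarith)
    have h4 := mul_le_mul_of_nonneg_right hkey
      (le_of_lt (by positivity : (0:ℝ) < 2 * (MH * (b - a) + 1)))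
    have h3 : I * (2 * (MH * (b - a) + 1)) ≤ MH * (b - a) * I := by
      calc I * (2 * (MH * (b - a) + 1))
          ≤ (MH * (I / (2 * (MH * (b - a) + 1))) * (b - a))
            * (2 * (MH * (b - a) + 1)) := h4
        _ = MH * (b - a) * I := by field_simp
    nlinarith [mul_nonneg hs hInn]
  -- H vanishes on Ioo
  have hH0 : ∀ x ∈ Ioo a b, H x = 0 := by
    intro x₁ hx₁
    by_contra hne
    have hx₁I : x₁ ∈ Icc a b := Ioo_subset_Icc_self hx₁
    have habs : 0 < |H x₁| := abs_pos.mpr hne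
    obtain ⟨δ, hδ, hball⟩ := Metric.continuousWithinAt_iff.mp (hHc x₁ hx₁I) |H x₁| habs
    set c : ℝ := max a (x₁ - δ / 2) with hc
    set d : ℝ := min b (x₁ + δ / 2) with hd
    have hcx : c < x₁ := max_lt hx₁.1 (by linarith)
    have hxd : x₁ < d := lt_min hx₁.2 (by linarith)
    have hIccsub : Icc c d ⊆ Icc a b :=
      Icc_subset_Icc (le_max_left _ _) (min_le_left _ _)
    have hpos : ∀ x ∈ Ioo c d, 0 < H x * H x := by
      intro x hx
      have hxI : x ∈ Icc a b := hIccsub (Ioo_subset_Icc_self hx)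
      have hdist : dist x x₁ < δ := by
        rw [Real.dist_eq, abs_lt]
        constructor
        · have := hx.1; have h1 : x₁ - δ / 2 ≤ c := le_max_right _ _; linarith
        · have := hx.2; have h2 : d ≤ x₁ + δ / 2 := min_le_right _ _; linarith
      have := hball hxI hdist
      rw [Real.dist_eq] at this
      have : H x ≠ 0 := by
        intro h0
        rw [h0, zero_sub, abs_neg] at this
        exact lt_irrefl _ this
      exact mul_self_pos.mpr this
    have hsubint : IntervalIntegrable (fun x => H x * H x) volume c d :=
      hIint.mono_set (by rw [uIcc_of_le (by linarith : c ≤ d), uIcc_of_le hab.le]; exact hIccsub)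
    have h1 : 0 < ∫ x in c..d, H x * H x :=
      intervalIntegral_pos_of_pos_on hsubint hpos (by linarith)
    have h2 : (∫ x in c..d, H x * H x) ≤ I := by
      apply intervalIntegral.integral_mono_interval
        (le_max_left _ _) (by linarith : c ≤ d) (min_le_left _ _)
        _ hIint
      filter_upwards with x
      exact mul_self_nonneg _
    linarith [hI0 ▸ lt_of_lt_of_le h1 h2]
  -- F vanishes on Ioo, then on Icc
  apply extend_zero_Icc hab hF
  intro x hx
  have := hH0 x hx
  rw [hH] at this
  have hq : (x - a) * (b - x) > 0 := mul_pos (by linarith [hx.1]) (by linarith [hx.2])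
  rcases mul_eq_zero.mp this with h | h
  · exact h
  · exact absurd h (ne_of_gt hq)

end ELaux

open intervalIntegral Metric Topology

/-- Caputo fractional Euler–Lagrange equation: a local minimizer of
`J(y) = ∫_a^b L(x, y(x), ^C_aD_x^α y(x)) dx` with fixed endpoints satisfies
`∂₂L + ₓD_b^α ∂₃L = 0` on `[a,b]`. -/
theorem euler_lagrange_caputo_scalar
    (a b α : ℝ) (hab : a < b) (hα0 : 0 < α) (hα1 : α < 1)
    (L : ℝ → ℝ → ℝ → ℝ)
    (hL : ContDiff ℝ 1 fun p : ℝ × ℝ × ℝ => L p.1 p.2.1 p.2.2)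
    (ya yb : ℝ) (y : ℝ → ℝ)
    (hy : MemDs a b α y) (hya : y a = ya) (hyb : y b = yb)
    (hmin : ∃ δ > (0:ℝ), ∀ z : ℝ → ℝ, MemDs a b α z → z a = ya → z b = yb →
      norm1infS a b α (fun x => z x - y x) < δ →
        (∫ x in a..b, L x (y x) (caputoL a α y x)) ≤ ∫ x in a..b, L x (z x) (caputoL a α z x))
    (hRL : HasContRightRLD a b α (d3Along a α L y)) :
    ∀ x ∈ Icc a b,
      d2 L x (y x) (caputoL a α y x) + rightRLD b α (d3Along a α L y) x = 0 := by
  classical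
  obtain ⟨δ, hδ, hminP⟩ := hmin
  have hbab : a ≤ b := hab.le
  have huIcc : uIcc a b = Icc a b := uIcc_of_le hbab
  have hyc : ContinuousOn y (Icc a b) :=
    fun x hx => ((hy.1 x hx).continuousAt).continuousWithinAt
  have hwc : ContinuousOn (caputoL a α y) (Icc a b) := hy.2.2
  -- continuity of the partial derivatives along the extremal
  have hd2c : ContinuousOn (fun x => d2 L x (y x) (caputoL a α y x)) (Icc a b) := by
    have hpt : ContinuousOn (fun x => ((x:ℝ), (y x, caputoL a α y x))) (Icc a b) :=
      continuousOn_id.prodMk (hyc.prodMk hwc)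
    have h1 : ContinuousOn (fun x =>
        (fderiv ℝ (fun p : ℝ × ℝ × ℝ => L p.1 p.2.1 p.2.2) (x, y x, caputoL a α y x))
          ((0:ℝ), (1:ℝ), (0:ℝ))) (Icc a b) :=
      ((hL.continuous_fderiv one_ne_zero).comp_continuousOn hpt).clm_apply continuousOn_const
    apply h1.congr
    intro x hx
    dsimp only
    rw [fderiv_apply_eq hL]
    ring
  have hd3c : ContinuousOn (fun x => d3 L x (y x) (caputoL a α y x)) (Icc a b) := by
    have hpt : ContinuousOn (fun x => ((x:ℝ), (y x, caputoL a α y x))) (Icc a b) :=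
      continuousOn_id.prodMk (hyc.prodMk hwc)
    have h1 : ContinuousOn (fun x =>
        (fderiv ℝ (fun p : ℝ × ℝ × ℝ => L p.1 p.2.1 p.2.2) (x, y x, caputoL a α y x))
          ((0:ℝ), (0:ℝ), (1:ℝ))) (Icc a b) :=
      ((hL.continuous_fderiv one_ne_zero).comp_continuousOn hpt).clm_apply continuousOn_const
    apply h1.congr
    intro x hx
    dsimp only
    rw [fderiv_apply_eq hL]
    ring
  -- the variational identity for polynomial variations vanishing at the ends
  have variational : ∀ Q : Polynomial ℝ, Q.eval a = 0 → Q.eval b = 0 →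
      (∫ x in a..b, d2 L x (y x) (caputoL a α y x) * Q.eval x
        + d3 L x (y x) (caputoL a α y x) * caputoL a α (fun t => Q.eval t) x) = 0 := by
    intro Q hQa hQb
    have hηc : Continuous (fun t : ℝ => Q.eval t) := by fun_prop
    have hcηc : ContinuousOn (caputoL a α (fun t => Q.eval t)) (Icc a b) :=
      contOn_caputo_poly hα0 hα1 a b Q
    have hD := firstVariation hab hL hyc hwc hηc.continuousOn hcηc
    obtain ⟨B0, hB0⟩ := isCompact_Icc.exists_bound_of_continuousOn
      (hηc.continuousOn : ContinuousOn (fun t : ℝ => Q.eval t) (Icc a b))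
    obtain ⟨B1, hB1⟩ := isCompact_Icc.exists_bound_of_continuousOn
      ((by fun_prop : Continuous (fun t : ℝ => Q.derivative.eval t)).continuousOn :
        ContinuousOn (fun t : ℝ => Q.derivative.eval t) (Icc a b))
    obtain ⟨B2, hB2⟩ := isCompact_Icc.exists_bound_of_continuousOn hcηc
    have haI : a ∈ Icc a b := ⟨le_rfl, hbab⟩
    have hB0n : 0 ≤ B0 := le_trans (norm_nonneg _) (hB0 a haI)
    have hB1n : 0 ≤ B1 := le_trans (norm_nonneg _) (hB1 a haI)
    have hB2n : 0 ≤ B2 := le_trans (norm_nonneg _) (hB2 a haI)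
    set ε₀ : ℝ := δ / (B0 + B1 + B2 + 1) with hε₀def
    have hε₀ : 0 < ε₀ := div_pos hδ (by linarith)
    have hlocmin : IsLocalMin (fun ε => ∫ x in a..b, L x (y x + ε * Q.eval x)
        (caputoL a α y x + ε * caputoL a α (fun t => Q.eval t) x)) 0 := by
      have hev : ∀ᶠ ε in 𝓝 (0:ℝ),
          (fun ε => ∫ x in a..b, L x (y x + ε * Q.eval x)
            (caputoL a α y x + ε * caputoL a α (fun t => Q.eval t) x)) 0
          ≤ (fun ε => ∫ x in a..b, L x (y x + ε * Q.eval x)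
            (caputoL a α y x + ε * caputoL a α (fun t => Q.eval t) x)) ε := by
        filter_upwards [Metric.ball_mem_nhds (0:ℝ) hε₀] with ε hε
        have hεabs : |ε| < ε₀ := by simpa [Real.dist_eq] using hε
        set z : ℝ → ℝ := fun t => y t + ε * Q.eval t with hzdef
        have hzdiff : ∀ x ∈ Icc a b, DifferentiableAt ℝ z x := fun x hx =>
          (hy.1 x hx).add (((Q.hasDerivAt x).const_mul ε).differentiableAt)
        have hzderiv : ∀ x ∈ Icc a b, deriv z x = deriv y x + ε * Q.derivative.eval x :=
          fun x hx => ((hy.1 x hx).hasDerivAt.add ((Q.hasDerivAt x).const_mul ε)).deriv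
        have hzcap : ∀ x ∈ Icc a b, caputoL a α z x
            = caputoL a α y x + ε * caputoL a α (fun t => Q.eval t) x := fun x hx =>
          caputo_add_smul_poly hα1 hy.1 hy.2.1 Q ε hx hbab
        have hzmem : MemDs a b α z := by
          refine ⟨hzdiff, ?_, ?_⟩
          · exact (hy.2.1.add (continuousOn_const.mul
              ((by fun_prop : Continuous (fun t : ℝ => Q.derivative.eval t)).continuousOn))).congr
              (fun x hx => hzderiv x hx)
          · exact (hwc.add (continuousOn_const.mul hcηc)).congr (fun x hx => hzcap x hx)
        have hza : z a = ya := by rw [hzdef]; dsimp only; rw [hQa, hya]; ring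
        have hzb : z b = yb := by rw [hzdef]; dsimp only; rw [hQb, hyb]; ring
        have hfun : (fun x => z x - y x) = fun x => ε * Q.eval x := by
          funext x; rw [hzdef]; dsimp only; ring
        have hnorm : norm1infS a b α (fun x => z x - y x) < δ := by
          rw [hfun]
          have s1 : sSup ((fun x => |ε * Q.eval x|) '' Icc a b) ≤ |ε| * B0 := by
            apply Real.sSup_le _ (by positivity)
            rintro v ⟨x, hx, rfl⟩
            dsimp only
            rw [abs_mul]
            exact mul_le_mul_of_nonneg_left
              (by simpa [Real.norm_eq_abs] using hB0 x hx) (abs_nonneg ε)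
          have s2 : sSup ((fun x => |deriv (fun x => ε * Q.eval x) x|) '' Icc a b)
              ≤ |ε| * B1 := by
            apply Real.sSup_le _ (by positivity)
            rintro v ⟨x, hx, rfl⟩
            dsimp only
            rw [((Q.hasDerivAt x).const_mul ε).deriv, abs_mul]
            exact mul_le_mul_of_nonneg_left
              (by simpa [Real.norm_eq_abs] using hB1 x hx) (abs_nonneg ε)
          have s3 : sSup ((fun x => |caputoL a α (fun x => ε * Q.eval x) x|) '' Icc a b)
              ≤ |ε| * B2 := by
            apply Real.sSup_le _ (by positivity)
            rintro v ⟨x, hx, rfl⟩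
            dsimp only
            rw [caputo_smul_poly a α ε Q x, abs_mul]
            exact mul_le_mul_of_nonneg_left
              (by simpa [Real.norm_eq_abs] using hB2 x hx) (abs_nonneg ε)
          have hsum : norm1infS a b α (fun x => ε * Q.eval x)
              = sSup ((fun x => |ε * Q.eval x|) '' Icc a b)
               + sSup ((fun x => |deriv (fun x => ε * Q.eval x) x|) '' Icc a b)
               + sSup ((fun x => |caputoL a α (fun x => ε * Q.eval x) x|) '' Icc a b) := rfl
          rw [hsum]
          calc sSup ((fun x => |ε * Q.eval x|) '' Icc a b)
               + sSup ((fun x => |deriv (fun x => ε * Q.eval x) x|) '' Icc a b)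
               + sSup ((fun x => |caputoL a α (fun x => ε * Q.eval x) x|) '' Icc a b)
              ≤ |ε| * B0 + |ε| * B1 + |ε| * B2 := by linarith
            _ ≤ |ε| * (B0 + B1 + B2 + 1) := by nlinarith [abs_nonneg ε]
            _ < ε₀ * (B0 + B1 + B2 + 1) :=
                mul_lt_mul_of_pos_right hεabs (by linarith)
            _ = δ := by rw [hε₀def]; field_simp
        have hle := hminP z hzmem hza hzb hnorm
        have hright : (∫ x in a..b, L x (z x) (caputoL a α z x))
            = ∫ x in a..b, L x (y x + ε * Q.eval x)
                (caputoL a α y x + ε * caputoL a α (fun t => Q.eval t) x) := by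
          apply intervalIntegral.integral_congr
          intro x hx
          rw [huIcc] at hx
          dsimp only
          rw [hzcap x hx]
        have hleft : (∫ x in a..b, L x (y x) (caputoL a α y x))
            = ∫ x in a..b, L x (y x + (0:ℝ) * Q.eval x)
                (caputoL a α y x + (0:ℝ) * caputoL a α (fun t => Q.eval t) x) := by
          apply intervalIntegral.integral_congr
          intro x _
          norm_num
        rw [← hleft]
        rw [hright] at hle
        exact hle
      exact hev
    have hzero := hlocmin.hasDerivAt_eq_zero hD
    rw [← hzero]
  -- integration by parts and conclusion via the fundamental lemma
  have hgc : ContinuousOn (d3Along a α L y) (Icc a b) := hd3c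
  have hintP : ∀ P : Polynomial ℝ,
      (∫ x in a..b, (d2 L x (y x) (caputoL a α y x) + rightRLD b α (d3Along a α L y) x)
        * ((x - a) * (b - x) * P.eval x)) = 0 := by
    intro P
    set Q : Polynomial ℝ := (Polynomial.X - Polynomial.C a) * (Polynomial.C b - Polynomial.X) * P
      with hQdef
    have hQeval : ∀ x : ℝ, Q.eval x = (x - a) * (b - x) * P.eval x := by
      intro x; simp [hQdef]
    have hQa : Q.eval a = 0 := by rw [hQeval]; ring
    have hQb : Q.eval b = 0 := by rw [hQeval]; ring
    have hvar := variational Q hQa hQb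
    have hparts := fracParts hab hα0 hα1 hgc hRL.1 hRL.2 Q hQa hQb
    have hint1 : IntervalIntegrable
        (fun x => d2 L x (y x) (caputoL a α y x) * Q.eval x) volume a b :=
      ((hd2c.mul ((by fun_prop : Continuous (fun x : ℝ => Q.eval x)).continuousOn)).mono
        (by rw [huIcc])).intervalIntegrable
    have hint2 : IntervalIntegrable
        (fun x => d3 L x (y x) (caputoL a α y x) * caputoL a α (fun t => Q.eval t) x)
        volume a b :=
      ((hd3c.mul (contOn_caputo_poly hα0 hα1 a b Q)).mono (by rw [huIcc])).intervalIntegrable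
    have hint3 : IntervalIntegrable
        (fun x => Q.eval x * rightRLD b α (d3Along a α L y) x) volume a b :=
      ((((by fun_prop : Continuous (fun x : ℝ => Q.eval x)).continuousOn).mul hRL.2).mono
        (by rw [huIcc])).intervalIntegrable
    rw [intervalIntegral.integral_add hint1 hint2] at hvar
    have hparts' : (∫ x in a..b,
        d3 L x (y x) (caputoL a α y x) * caputoL a α (fun t => Q.eval t) x)
        = ∫ x in a..b, Q.eval x * rightRLD b α (d3Along a α L y) x := hparts
    rw [hparts'] at hvar
    rw [← hvar, ← intervalIntegral.integral_add hint1 hint3]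
    apply intervalIntegral.integral_congr
    intro x _
    dsimp only
    rw [← hQeval x]
    ring
  have hFc : ContinuousOn (fun x => d2 L x (y x) (caputoL a α y x)
      + rightRLD b α (d3Along a α L y) x) (Icc a b) := hd2c.add hRL.2
  exact fun x hx => fundamentalLemma hab hFc hintP x hx

end
end

section
/- Let α ∈ (0,1) and ξ ∈ ℝ, and define y:[0,1]→ℝ by y(x) = ξ ∫_0^x E_{1−α}(−(x−t)^{1−α}) dt. Then y is differentiable on (0,1] with y(0)=0, and y'(x) + (^C_0D_x^α y)(x) = ξ for all x ∈ (0,1]. -/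
open MeasureTheory Set

noncomputable section

/-- The Mittag-Leffler function `E_μ(z) = ∑_{k=0}^∞ z^k / Γ(μ k + 1)`. -/
def mittagLeffler (μ z : ℝ) : ℝ :=
  ∑' k : ℕ, z ^ k / Real.Gamma (μ * k + 1)

lemma ml_summable {μ : ℝ} (hμ : 0 < μ) (R : ℝ) :
    Summable (fun k : ℕ => R ^ k / Real.Gamma (μ * k + 1)) := by
  have hΓpos : ∀ k : ℕ, 0 < Real.Gamma (μ * k + 1) := fun k =>
    Real.Gamma_pos_of_pos (by positivity)
  have key : ∀ S : ℝ, 1 ≤ S → Summable (fun k : ℕ => S ^ k / Real.Gamma (μ * k + 1)) := by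
    intro S hS
    have hS0 : 0 < S := lt_of_lt_of_le one_pos hS
    set W : ℝ := (2 * S) ^ (1 / μ) with hW
    have h2S : (1:ℝ) ≤ 2 * S := by nlinarith
    have hW1 : 1 ≤ W := Real.one_le_rpow h2S (by positivity)
    have hW0 : 0 < W := lt_of_lt_of_le one_pos hW1
    have hWμ : W ^ μ = 2 * S := by
      rw [hW, ← Real.rpow_mul (by positivity), one_div, inv_mul_cancel₀ hμ.ne', Real.rpow_one]
    have hbound : ∀ k : ℕ, 1 ≤ μ * k →
        S ^ k / Real.Gamma (μ * k + 1) ≤ (Real.exp W * W) * (1 / 2) ^ k := by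
      intro k hk
      set n : ℕ := ⌊μ * k⌋₊ with hn
      have hn1 : (1:ℝ) ≤ (n:ℝ) := by
        have : (1:ℕ) ≤ n := Nat.le_floor (by exact_mod_cast hk)
        exact_mod_cast this
      have hfloor_le : (n : ℝ) ≤ μ * k := Nat.floor_le (by positivity)
      have hlt : μ * k - 1 ≤ (n : ℝ) := by
        have := Nat.lt_floor_add_one (μ * k); linarith
      have hmono : (n.factorial : ℝ) ≤ Real.Gamma (μ * k + 1) := by
        have h1 : Real.Gamma ((n : ℝ) + 1) ≤ Real.Gamma (μ * k + 1) := by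
          rcases eq_or_lt_of_le hfloor_le with h | h
          · rw [h]
          · exact le_of_lt (Real.Gamma_strictMonoOn_Ici
              (by simp only [mem_Ici]; linarith)
              (by simp only [mem_Ici]; linarith) (by linarith))
        rwa [Real.Gamma_nat_eq_factorial] at h1
      have hfact : W ^ (μ * k - 1) / Real.exp W ≤ (n.factorial : ℝ) := by
        have h1 : W ^ n / (n.factorial : ℝ) ≤ Real.exp W :=
          Real.pow_div_factorial_le_exp W hW0.le n
        have h2 : W ^ (μ * k - 1) ≤ W ^ n := by
          rw [← Real.rpow_natCast W n]
          exact Real.rpow_le_rpow_of_exponent_le hW1 hlt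
        have h3 : (0:ℝ) < (n.factorial : ℝ) := by positivity
        rw [div_le_iff₀ h3] at h1
        rw [div_le_iff₀ (Real.exp_pos W)]
        calc W ^ (μ * k - 1) ≤ W ^ n := h2
          _ ≤ (n.factorial : ℝ) * Real.exp W := by linarith
      have hWpow : W ^ (μ * k - 1) = (2 * S) ^ k / W := by
        rw [Real.rpow_sub hW0, Real.rpow_one, Real.rpow_mul hW0.le, hWμ,
          Real.rpow_natCast]
      have hΓ_ge : (2 * S) ^ k / (W * Real.exp W) ≤ Real.Gamma (μ * k + 1) := by
        calc (2 * S) ^ k / (W * Real.exp W) = W ^ (μ * k - 1) / Real.exp W := by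
              rw [hWpow]; ring
          _ ≤ (n.factorial : ℝ) := hfact
          _ ≤ _ := hmono
      have h2Spos : (0:ℝ) < (2 * S) ^ k := by positivity
      rw [div_le_iff₀ (hΓpos k)]
      calc S ^ k = (Real.exp W * W) * (1/2)^k * ((2*S)^k / (W * Real.exp W)) := by
            rw [mul_pow, div_pow]
            field_simp
            ring
        _ ≤ (Real.exp W * W) * (1/2)^k * Real.Gamma (μ * k + 1) := by
            apply mul_le_mul_of_nonneg_left hΓ_ge
            positivity
    -- conclude summability via tail comparison
    set N : ℕ := ⌈1 / μ⌉₊ with hN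
    rw [← summable_nat_add_iff N]
    have hgeo : Summable (fun k : ℕ => (Real.exp W * W) * (1/2 : ℝ) ^ (k + N)) := by
      simp_rw [pow_add]
      exact ((summable_geometric_of_lt_one (by norm_num) (by norm_num)).mul_right _).mul_left _
    apply Summable.of_nonneg_of_le (fun k => by positivity) (fun k => ?_) hgeo
    apply hbound (k + N)
    · have hN1 : 1 / μ ≤ (N : ℝ) := Nat.le_ceil _
      have : (N:ℝ) ≤ (k + N : ℕ) := by exact_mod_cast Nat.le_add_left N k
      calc (1:ℝ) = μ * (1/μ) := by field_simp
        _ ≤ μ * N := by nlinarith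
        _ ≤ μ * (k + N : ℕ) := by nlinarith
  -- general R
  apply Summable.of_abs
  apply Summable.of_nonneg_of_le (fun k => abs_nonneg _)
    (fun k => ?_) (key (|R| + 1) (by linarith [abs_nonneg R]))
  rw [abs_div, abs_of_pos (hΓpos k), abs_pow]
  gcongr
  linarith [abs_nonneg R]

lemma ml_continuousOn {μ R : ℝ} (hμ : 0 < μ) :
    ContinuousOn (mittagLeffler μ) (Icc (-R) R) := by
  have hΓpos : ∀ k : ℕ, 0 < Real.Gamma (μ * k + 1) := fun k =>
    Real.Gamma_pos_of_pos (by positivity)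
  unfold mittagLeffler
  apply continuousOn_tsum (u := fun k : ℕ => R ^ k / Real.Gamma (μ * k + 1))
    (fun k => ((continuous_pow k).div_const _).continuousOn) (ml_summable hμ R)
  intro k z hz
  have hzR : |z| ≤ R := abs_le.mpr ⟨hz.1, hz.2⟩
  have hR0 : 0 ≤ R := le_trans (abs_nonneg z) hzR
  rw [Real.norm_eq_abs, abs_div, abs_of_pos (hΓpos k), abs_pow]
  gcongr

lemma g_continuous {μ : ℝ} (hμ0 : 0 < μ) (hμ1 : μ ≤ 1) :
    Continuous fun s : ℝ => mittagLeffler μ (-s ^ μ) := by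
  rw [continuous_iff_continuousAt]
  intro a
  have hin : Continuous fun s : ℝ => -s ^ μ :=
    (Real.continuous_rpow_const hμ0.le).neg
  set R : ℝ := |(-a ^ μ : ℝ)| + 1 with hR
  have hmem : (-a ^ μ : ℝ) ∈ Ioo (-R) R := by
    have h := abs_nonneg (-a ^ μ : ℝ)
    constructor
    · rw [hR, neg_add]; cases abs_cases (-a ^ μ : ℝ) with
      | inl h' => linarith [h'.1]
      | inr h' => linarith [h'.1]
    · rw [hR]; cases abs_cases (-a ^ μ : ℝ) with
      | inl h' => linarith [h'.1]
      | inr h' => linarith [h'.1]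
  have hE : ContinuousAt (mittagLeffler μ) (-a ^ μ) :=
    (ml_continuousOn (R := R) hμ0).continuousAt (Icc_mem_nhds hmem.1 hmem.2)
  exact ContinuousAt.comp (f := fun s : ℝ => -s ^ μ) hE hin.continuousAt

lemma beta_real {p q x : ℝ} (hp : 0 < p) (hq : 0 < q) (hx : 0 < x) :
    ∫ t in (0:ℝ)..x, t ^ (p-1) * (x - t) ^ (q-1) =
      Real.Gamma p * Real.Gamma q / Real.Gamma (p+q) * x ^ (p+q-1) := by
  have h1 : (∫ t in (0:ℝ)..x, (((t ^ (p-1) * (x - t) ^ (q-1) : ℝ)) : ℂ)) =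
      (x:ℂ) ^ ((p:ℂ) + q - 1) * Complex.betaIntegral p q := by
    rw [← Complex.betaIntegral_scaled p q hx]
    apply intervalIntegral.integral_congr
    intro t ht
    rw [uIcc_of_le hx.le] at ht
    have ht0 : 0 ≤ t := ht.1
    have htx : 0 ≤ x - t := by linarith [ht.2]
    push_cast
    rw [Complex.ofReal_cpow ht0, Complex.ofReal_cpow htx]
    push_cast
    ring
  have hβ : Complex.betaIntegral p q =
      ((Real.Gamma p * Real.Gamma q / Real.Gamma (p+q) : ℝ) : ℂ) := by
    have h2 := Complex.Gamma_mul_Gamma_eq_betaIntegral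
      (s := (p:ℂ)) (t := (q:ℂ)) (by simpa using hp) (by simpa using hq)
    have hne : Complex.Gamma ((p:ℂ) + q) ≠ 0 :=
      Complex.Gamma_ne_zero_of_re_pos (by simp; positivity)
    rw [eq_comm, Complex.ofReal_div, Complex.ofReal_mul,
      ← Complex.Gamma_ofReal, ← Complex.Gamma_ofReal, ← Complex.Gamma_ofReal,
      Complex.ofReal_add, div_eq_iff (by rw [← Complex.ofReal_add]; push_cast at hne ⊢; exact hne)]
    linear_combination h2
  rw [intervalIntegral.integral_ofReal, hβ] at h1
  have hx' : (x:ℂ) ^ ((p:ℂ) + q - 1) = ((x ^ (p+q-1) : ℝ) : ℂ) := by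
    rw [Complex.ofReal_cpow hx.le]; push_cast; ring_nf
  rw [hx', ← Complex.ofReal_mul] at h1
  have := Complex.ofReal_inj.mp h1
  rw [this]; ring

lemma key_integral {α x : ℝ} (hα : α ∈ Ioo (0:ℝ) 1) (hx : 0 < x) :
    (∫ t in (0:ℝ)..x, (x - t) ^ (-α) * mittagLeffler (1-α) (-t ^ (1-α))) =
      Real.Gamma (1-α) * (1 - mittagLeffler (1-α) (-x ^ (1-α))) := by
  obtain ⟨hα0, hα1⟩ := hα
  set μ : ℝ := 1 - α with hμdef
  have hμ0 : 0 < μ := by simp [hμdef]; linarith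
  have hΓpos : ∀ k : ℕ, 0 < Real.Gamma (μ * k + 1) := fun k =>
    Real.Gamma_pos_of_pos (by positivity)
  -- the summands
  set F : ℕ → ℝ → ℝ := fun k t => (x - t) ^ (-α) * ((-t ^ μ) ^ k / Real.Gamma (μ * k + 1))
    with hF
  -- Step A : integrand as a tsum
  have hA : ∀ t : ℝ, (x - t) ^ (-α) * mittagLeffler μ (-t ^ μ) = ∑' k, F k t := by
    intro t
    rw [mittagLeffler, ← tsum_mul_left]
  -- Step B : Beta values
  have hGval : ∀ k : ℕ, (∫ t in (0:ℝ)..x, t ^ (μ * k) * (x - t) ^ (-α))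
      = Real.Gamma (μ * k + 1) * Real.Gamma (1-α) / Real.Gamma (μ * (k+1) + 1)
        * x ^ (μ * (k+1)) := by
    intro k
    have h := beta_real (p := μ * k + 1) (q := 1 - α) (by positivity) (by linarith) hx
    rw [show μ * (k:ℝ) + 1 - 1 = μ * k by ring, show (1:ℝ) - α - 1 = -α by ring,
      show μ * (k:ℝ) + 1 + (1 - α) = μ * ((k:ℝ)+1) + 1 by rw [hμdef]; ring,
      show μ * ((k:ℝ)+1) + 1 - 1 = μ * ((k:ℝ)+1) by ring] at h
    rw [h]
  -- Step C : integrability of the base functions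
  have hGintg : ∀ k : ℕ, IntervalIntegrable
      (fun t => t ^ (μ * k) * (x - t) ^ (-α)) volume 0 x := by
    intro k
    have h1 : IntervalIntegrable (fun t : ℝ => t ^ (-α)) volume 0 x :=
      intervalIntegral.intervalIntegrable_rpow' (by linarith)
    have h2 : IntervalIntegrable (fun t : ℝ => (x - t) ^ (-α)) volume 0 x := by
      have := (intervalIntegral.intervalIntegrable_rpow' (a := 0) (b := x) (r := -α)
        (by linarith)).comp_sub_left x
      simpa using this.symm
    exact h2.continuousOn_mul ((Real.continuous_rpow_const (by positivity)).continuousOn)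
  -- pointwise relation between F k and the base functions on Ioc
  have hae : ∀ (k : ℕ), ∀ t ∈ Ioc (0:ℝ) x, F k t =
      ((-1:ℝ)^k / Real.Gamma (μ * k + 1)) * (t ^ (μ * k) * (x - t) ^ (-α)) := by
    intro k t ht
    have ht0 : (0:ℝ) ≤ t := ht.1.le
    have hpow : (t ^ μ) ^ k = t ^ (μ * k) := by
      rw [← Real.rpow_natCast (t ^ μ) k, ← Real.rpow_mul ht0]
    show (x - t) ^ (-α) * ((-t ^ μ) ^ k / Real.Gamma (μ * k + 1)) = _
    rw [neg_pow, hpow]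
    ring
  -- a.e. strong measurability
  have hmeas : ∀ k : ℕ, AEStronglyMeasurable (F k) (volume.restrict (Ioc 0 x)) := by
    intro k
    rw [← Measure.restrict_congr_set Ioo_ae_eq_Ioc]
    apply ContinuousOn.aestronglyMeasurable ?_ measurableSet_Ioo
    have c2 : Continuous fun t : ℝ => (-t ^ μ) ^ k / Real.Gamma (μ * k + 1) :=
      (((Real.continuous_rpow_const hμ0.le).neg).pow k).div_const _
    refine ContinuousOn.mul (fun t ht => ?_) c2.continuousOn
    have hxt : x - t ≠ 0 := sub_ne_zero.mpr (ht.2.ne')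
    exact ((Real.continuousAt_rpow_const (x - t) (-α) (Or.inl hxt)).comp
      ((continuous_const.sub continuous_id).continuousAt)).continuousWithinAt
  -- integrability of each F k
  have hFint : ∀ k : ℕ, IntegrableOn (F k) (Ioc 0 x) volume := by
    intro k
    have h1 : IntegrableOn (fun t => t ^ (μ * k) * (x - t) ^ (-α)) (Ioc 0 x) volume :=
      (intervalIntegrable_iff_integrableOn_Ioc_of_le hx.le).mp (hGintg k)
    refine (h1.const_mul ((-1:ℝ)^k / Real.Gamma (μ * k + 1))).congr ?_
    filter_upwards [ae_restrict_mem measurableSet_Ioc] with t ht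
    exact (hae k t ht).symm
  -- value of the norm integrals
  have hnorm : ∀ k : ℕ, (∫ t in Ioc (0:ℝ) x, ‖F k t‖)
      = Real.Gamma (1-α) * x ^ (μ * ((k:ℝ)+1)) / Real.Gamma (μ * ((k:ℝ)+1) + 1) := by
    intro k
    have h1 : ∀ᵐ t ∂(volume.restrict (Ioc (0:ℝ) x)), ‖F k t‖
        = (1 / Real.Gamma (μ * k + 1)) * (t ^ (μ * k) * (x - t) ^ (-α)) := by
      filter_upwards [ae_restrict_mem measurableSet_Ioc] with t ht
      have hG0 : 0 ≤ t ^ (μ * k) * (x - t) ^ (-α) :=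
        mul_nonneg (Real.rpow_nonneg ht.1.le _) (Real.rpow_nonneg (by linarith [ht.2]) _)
      rw [hae k t ht, norm_mul, Real.norm_eq_abs, Real.norm_eq_abs, abs_div, abs_pow,
        abs_neg, abs_one, one_pow, abs_of_pos (hΓpos k), abs_of_nonneg hG0]
    rw [integral_congr_ae h1, integral_const_mul, ← intervalIntegral.integral_of_le hx.le,
      hGval k]
    field_simp
  -- summability of the integral values
  have hxpow : ∀ j : ℕ, x ^ (μ * (j:ℝ)) = (x ^ μ) ^ j := by
    intro j
    rw [← Real.rpow_natCast (x ^ μ) j, ← Real.rpow_mul hx.le]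
  have hbsum : Summable (fun k : ℕ =>
      Real.Gamma (1-α) * x ^ (μ * ((k:ℝ)+1)) / Real.Gamma (μ * ((k:ℝ)+1) + 1)) := by
    have h0 : Summable (fun j : ℕ => (x ^ μ) ^ j / Real.Gamma (μ * j + 1)) :=
      ml_summable hμ0 _
    have h1 := (summable_nat_add_iff 1).mpr h0
    refine ((h1.mul_left (Real.Gamma (1-α))).congr ?_)
    intro k
    have h2 := hxpow (k+1)
    push_cast at h2 ⊢
    rw [h2]
    ring
  -- finiteness of the lintegral sum
  have hlint : (∑' k : ℕ, ∫⁻ t in Ioc (0:ℝ) x, ‖F k t‖₊) ≠ ⊤ := by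
    have heq : ∀ k : ℕ, (∫⁻ t in Ioc (0:ℝ) x, ‖F k t‖₊)
        = ENNReal.ofReal (∫ t in Ioc (0:ℝ) x, ‖F k t‖) := fun k =>
      (ofReal_integral_norm_eq_lintegral_enorm (hFint k)).symm
    calc (∑' k : ℕ, ∫⁻ t in Ioc (0:ℝ) x, ‖F k t‖₊)
        = ∑' k : ℕ, ENNReal.ofReal (Real.Gamma (1-α) * x ^ (μ * ((k:ℝ)+1))
            / Real.Gamma (μ * ((k:ℝ)+1) + 1)) := by
          congr 1; funext k; rw [heq k, hnorm k]
      _ = ENNReal.ofReal (∑' k : ℕ, Real.Gamma (1-α) * x ^ (μ * ((k:ℝ)+1))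
            / Real.Gamma (μ * ((k:ℝ)+1) + 1)) := by
          refine (ENNReal.ofReal_tsum_of_nonneg (fun k => ?_) hbsum).symm
          have := hΓpos (k+1)
          push_cast at this
          positivity
      _ ≠ ⊤ := ENNReal.ofReal_ne_top
  -- value of each integral
  have hFval : ∀ k : ℕ, (∫ t in Ioc (0:ℝ) x, F k t)
      = (-1:ℝ)^k * (Real.Gamma (1-α) * x ^ (μ * ((k:ℝ)+1))
          / Real.Gamma (μ * ((k:ℝ)+1) + 1)) := by
    intro k
    have h1 : ∀ᵐ t ∂(volume.restrict (Ioc (0:ℝ) x)), F k t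
        = ((-1:ℝ)^k / Real.Gamma (μ * k + 1)) * (t ^ (μ * k) * (x - t) ^ (-α)) := by
      filter_upwards [ae_restrict_mem measurableSet_Ioc] with t ht
      exact hae k t ht
    rw [integral_congr_ae h1, integral_const_mul, ← intervalIntegral.integral_of_le hx.le,
      hGval k]
    field_simp
  -- series for E at x and summability
  have hE : mittagLeffler μ (-x ^ μ) = ∑' j : ℕ, (-x^μ)^j / Real.Gamma (μ * j + 1) := rfl
  have hsum' : Summable (fun j : ℕ => (-x^μ)^j / Real.Gamma (μ * j + 1)) := by
    apply Summable.of_abs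
    refine (ml_summable hμ0 (x^μ)).congr (fun j => ?_)
    rw [abs_div, abs_pow, abs_neg, abs_of_nonneg (Real.rpow_nonneg hx.le μ),
      abs_of_pos (hΓpos j)]
  have hterm : ∀ k : ℕ, (-1:ℝ)^k * (Real.Gamma (1-α) * x ^ (μ * ((k:ℝ)+1))
      / Real.Gamma (μ * ((k:ℝ)+1) + 1))
      = (-Real.Gamma (1-α)) * ((-x^μ)^(k+1) / Real.Gamma (μ * ((k+1 : ℕ):ℝ) + 1)) := by
    intro k
    have h2 := hxpow (k+1)
    push_cast at h2 ⊢
    rw [h2, neg_pow, pow_succ]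
    ring
  have hshift := Summable.tsum_eq_zero_add hsum'
  have hEshift : mittagLeffler μ (-x^μ)
      = 1 + ∑' k : ℕ, ((-x^μ)^(k+1) / Real.Gamma (μ * ((k+1:ℕ):ℝ) + 1)) := by
    rw [hE, hshift]
    norm_num [Real.Gamma_one]
  rw [intervalIntegral.integral_of_le hx.le]
  simp only [hA]
  rw [MeasureTheory.integral_tsum hmeas hlint, tsum_congr hFval, tsum_congr hterm,
    tsum_mul_left, hEshift]
  ring

/-- The function `y(x) = ξ ∫_0^x E_{1−α}(−(x−t)^{1−α}) dt` satisfies `y(0) = 0`,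
is differentiable on `(0,1]`, and solves `y'(x) + (^C_0D_x^α y)(x) = ξ` there. -/
theorem mittagLeffler_solves_fractional_equation
    (α ξ : ℝ) (hα : α ∈ Ioo (0:ℝ) 1) (y : ℝ → ℝ)
    (hy : y = fun x => ξ * ∫ t in (0:ℝ)..x, mittagLeffler (1 - α) (-(x - t) ^ (1 - α))) :
    y 0 = 0 ∧
    ∀ x ∈ Ioc (0:ℝ) 1, DifferentiableAt ℝ y x ∧ deriv y x + caputoL 0 α y x = ξ := by
  obtain ⟨hα0, hα1⟩ := hα
  have hμ0 : (0:ℝ) < 1 - α := by linarith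
  set g : ℝ → ℝ := fun s => mittagLeffler (1-α) (-s ^ (1-α)) with hg
  have hgc : Continuous g := g_continuous hμ0 (by linarith)
  have hy' : y = fun x => ξ * ∫ s in (0:ℝ)..x, g s := by
    rw [hy]; funext x
    congr 1
    have h := intervalIntegral.integral_comp_sub_left (a := (0:ℝ)) (b := x) (f := g) x
    rw [sub_self, sub_zero] at h
    exact h
  have hderiv : ∀ t : ℝ, HasDerivAt y (ξ * g t) t := by
    intro t
    rw [hy']
    exact ((hgc.integral_hasStrictDerivAt 0 t).hasDerivAt).const_mul ξ
  refine ⟨by rw [hy]; simp, ?_⟩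
  intro x hx
  obtain ⟨hx0, _⟩ := hx
  refine ⟨(hderiv x).differentiableAt, ?_⟩
  have hΓ : Real.Gamma (1-α) ≠ 0 := (Real.Gamma_pos_of_pos (by linarith)).ne'
  have hcap : caputoL 0 α y x = ξ * (1 - g x) := by
    rw [caputoL]
    have h1 : (∫ t in (0:ℝ)..x, (x - t) ^ (-α) * deriv y t)
        = ∫ t in (0:ℝ)..x, ξ * ((x - t) ^ (-α) * g t) := by
      apply intervalIntegral.integral_congr
      intro t _
      show (x - t) ^ (-α) * deriv y t = ξ * ((x - t) ^ (-α) * g t)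
      rw [(hderiv t).deriv]
      ring
    rw [h1, intervalIntegral.integral_const_mul, key_integral ⟨hα0, hα1⟩ hx0]
    field_simp
    ring
  rw [(hderiv x).deriv, hcap]
  ring

end
end
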